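/- arXiv:2004.03920 — 3 statements merged into one kernel-verified Lean document; each statement's English description precedes it below -/
import Mathlib

section
/- Fix a real number λ ≠ 0. For every integer n ≥ 1, Σ_{m=1}^{n} B_{m,λ} S_{1,λ}(n,m) = (1)_{n,λ}. -/
/-!
Put `g = e_λ(t) - 1` and `S_{2,λ}(m,k) = m!/k! [t^m] g^k`. Reading off coefficients of
`e_λ(g(t))` gives `B_{m,λ} = Σ_k (1)_{k,λ} S_{2,λ}(m,k)`. For natural `N`, `e_λ^N(t) = (1 + g)^N`,
so `(N)_{m,λ} = Σ_k S_{2,λ}(m,k) (N)_k`; substituting this into the defining relation of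
`S_{1,λ}` and using that the falling factorials `(N)_k` are linearly independent as functions of
`N ∈ ℕ` yields the orthogonality `Σ_m S_{1,λ}(n,m) S_{2,λ}(m,k) = δ_{nk}`, whence the sum over
`0 ≤ m ≤ n` is `(1)_{n,λ}`. The term `m = 0` vanishes since `S_{1,λ}(n,0) = (0)_n = 0` for `n ≥ 1`.
-/

open Finset

/-- The degenerate falling factorial `(x)_{n,λ} = x(x−λ)⋯(x−(n−1)λ)`;
for `lam = 1` it is the ordinary falling factorial `(x)_n`. -/
noncomputable def dff (lam : ℝ) (n : ℕ) (x : ℝ) : ℝ :=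
  ∏ i ∈ Finset.range n, (x - i * lam)

/-- The degenerate exponential `e_λ^x(t) = Σ_{n≥0} (x)_{n,λ} t^n/n!`. -/
noncomputable def degExp (lam x : ℝ) : PowerSeries ℝ :=
  PowerSeries.mk fun n => dff lam n x / n.factorial

/-- The degenerate logarithm `log_λ(1+t) = Σ_{n≥1} λ^{n−1}(1)_{n,1/λ} t^n/n!`. -/
noncomputable def degLog (lam : ℝ) : PowerSeries ℝ :=
  PowerSeries.mk fun n =>
    if n = 0 then 0 else lam ^ (n - 1) * dff (1 / lam) n 1 / n.factorial

/-- Composition `f(g(t))` of formal power series (valid definition of composition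
when `g` has zero constant term, as in all uses below). -/
noncomputable def pscomp (f g : PowerSeries ℝ) : PowerSeries ℝ :=
  PowerSeries.mk fun n =>
    ∑ k ∈ Finset.range (n + 1), (PowerSeries.coeff k f) * (PowerSeries.coeff n (g ^ k))

open PowerSeries

lemma dff_zero (lam x : ℝ) : dff lam 0 x = 1 := prod_range_zero _

lemma dff_succ (lam x : ℝ) (n : ℕ) : dff lam (n + 1) x = dff lam n x * (x - n * lam) :=
  prod_range_succ _ _

lemma dff_at_zero (lam : ℝ) {n : ℕ} (hn : n ≠ 0) : dff lam n 0 = 0 :=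
  prod_eq_zero (i := 0) (by simpa [Nat.pos_iff_ne_zero]) (by simp)

lemma dff_one_natCast (n N : ℕ) : dff 1 n N = N.descFactorial n := by
  simp [dff, ← descPochhammer_eval_eq_prod_range, descPochhammer_eval_eq_descFactorial]

lemma dff_add (lam x y : ℝ) (n : ℕ) :
    dff lam n (x + y) =
      ∑ ij ∈ antidiagonal n, n.choose ij.1 * (dff lam ij.1 x * dff lam ij.2 y) := by
  induction n with
  | zero => simp [dff_zero]
  | succ n ih =>
    rw [sum_antidiagonal_choose_succ_mul (fun i j => dff lam i x * dff lam j y),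
      ← sum_add_distrib, dff_succ, ih, sum_mul]
    refine sum_congr rfl fun ij hij => ?_
    rw [HasAntidiagonal.mem_antidiagonal] at hij
    rw [Nat.choose_symm_of_eq_add hij.symm, dff_succ, dff_succ, ← hij]
    push_cast
    ring

@[simp]
lemma coeff_degExp (lam x : ℝ) (n : ℕ) : coeff n (degExp lam x) = dff lam n x / n.factorial :=
  coeff_mk _ _

lemma degExp_add (lam x y : ℝ) : degExp lam (x + y) = degExp lam x * degExp lam y := by
  ext n
  simp only [coeff_degExp, coeff_mul, dff_add, sum_div]
  refine sum_congr rfl fun ij hij => ?_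
  rw [HasAntidiagonal.mem_antidiagonal] at hij
  subst hij
  rw [Nat.cast_choose ℝ (Nat.le_add_right _ _), Nat.add_sub_cancel_left]
  field_simp

lemma degExp_zero (lam : ℝ) : degExp lam 0 = 1 := by
  ext n
  rcases eq_or_ne n 0 with rfl | hn
  · simp [dff_zero]
  · simp [dff_at_zero lam hn, hn]

lemma degExp_natCast (lam : ℝ) (N : ℕ) : degExp lam N = degExp lam 1 ^ N := by
  induction N with
  | zero => simpa using degExp_zero lam
  | succ N ih => rw [Nat.cast_succ, degExp_add, ih, pow_succ]

noncomputable def degStirling2 (lam : ℝ) (m k : ℕ) : ℝ :=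
  m.factorial / k.factorial * coeff m ((degExp lam 1 - 1) ^ k)

lemma degStirling2_eq_zero_of_lt (lam : ℝ) {m k : ℕ} (h : m < k) :
    degStirling2 lam m k = 0 := by
  obtain ⟨q, hq⟩ : X ∣ degExp lam 1 - 1 := by
    rw [X_dvd_iff, map_sub, ← coeff_zero_eq_constantCoeff_apply, coeff_degExp, dff_zero]
    simp
  rw [degStirling2, hq, mul_pow, coeff_X_pow_mul', if_neg (by omega), mul_zero]

lemma dff_natCast_eq_sum_degStirling2 (lam : ℝ) (m N : ℕ) :
    dff lam m N = ∑ k ∈ range (N + 1), degStirling2 lam m k * N.descFactorial k := by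
  have hm : (m.factorial : ℝ) ≠ 0 := by positivity
  have h : dff lam m N / m.factorial = coeff m ((degExp lam 1 - 1 + 1) ^ N) := by
    rw [sub_add_cancel, ← degExp_natCast, coeff_degExp]
  rw [add_pow, div_eq_iff hm] at h
  rw [h, map_sum, sum_mul]
  refine sum_congr rfl fun k _ => ?_
  have hk : (k.factorial : ℝ) ≠ 0 := by positivity
  rw [one_pow, mul_one, ← map_natCast (C (R := ℝ)), coeff_mul_C, degStirling2,
    Nat.descFactorial_eq_factorial_mul_choose]
  push_cast
  field_simp

lemma eq_zero_of_sum_mul_descFactorial_eq_zero {R : Type*} [CommRing R] [IsDomain R]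
    [CharZero R] {c : ℕ → R} (h : ∀ N : ℕ, ∑ k ∈ range (N + 1), c k * N.descFactorial k = 0)
    (k : ℕ) : c k = 0 := by
  induction k using Nat.strong_induction_on with
  | _ k ih =>
    have hk := h k
    rw [sum_range_succ, sum_eq_zero fun i hi => by rw [ih i (mem_range.1 hi), zero_mul],
      zero_add, Nat.descFactorial_self] at hk
    exact (mul_eq_zero.1 hk).resolve_right (by exact_mod_cast k.factorial_ne_zero)

lemma sum_mul_degStirling2_eq_ite (lam : ℝ) {n : ℕ} {s : ℕ → ℝ}
    (hs : ∀ x, dff 1 n x = ∑ l ∈ range (n + 1), s l * dff lam l x) (k : ℕ) :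
    ∑ m ∈ range (n + 1), s m * degStirling2 lam m k = if k = n then 1 else 0 := by
  rw [← sub_eq_zero]
  refine eq_zero_of_sum_mul_descFactorial_eq_zero
    (c := fun k => ∑ m ∈ range (n + 1), s m * degStirling2 lam m k - if k = n then 1 else 0)
    (fun N => ?_) k
  calc ∑ k ∈ range (N + 1),
        (∑ m ∈ range (n + 1), s m * degStirling2 lam m k - if k = n then 1 else 0)
          * N.descFactorial k
      = ∑ m ∈ range (n + 1), s m * dff lam m N
          - ∑ k ∈ range (N + 1), if n = k then (N.descFactorial k : ℝ) else 0 := by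
        simp only [sub_mul, sum_sub_distrib, sum_mul, dff_natCast_eq_sum_degStirling2, mul_sum,
          ite_mul, one_mul, zero_mul, eq_comm (a := n), mul_assoc]
        rw [sum_comm]
    _ = 0 := by
        rw [← hs, dff_one_natCast, sum_ite_eq]
        split_ifs with h
        · exact sub_self _
        · rw [mem_range] at h
          rw [Nat.descFactorial_eq_zero_iff_lt.2 (by omega), Nat.cast_zero, sub_zero]

lemma eq_zero_of_dff_one_eq_sum (lam : ℝ) {n : ℕ} (hn : n ≠ 0) {s : ℕ → ℝ}
    (hs : ∀ x, dff 1 n x = ∑ l ∈ range (n + 1), s l * dff lam l x) : s 0 = 0 := by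
  have h0 := hs 0
  rwa [sum_range_succ', sum_eq_zero fun l _ => by rw [dff_at_zero lam l.succ_ne_zero, mul_zero],
    dff_zero, dff_at_zero 1 hn, zero_add, mul_one, eq_comm] at h0

lemma eq_sum_dff_mul_degStirling2_of_pscomp_eq (lam x : ℝ) {b : ℕ → ℝ}
    (hb : pscomp (degExp lam x) (degExp lam 1 - 1) = PowerSeries.mk fun n => b n / n.factorial)
    (m : ℕ) : b m = ∑ k ∈ range (m + 1), dff lam k x * degStirling2 lam m k := by
  have hm : (m.factorial : ℝ) ≠ 0 := by positivity
  have h := congrArg (coeff m) hb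
  simp only [pscomp, coeff_mk, coeff_degExp] at h
  rw [eq_div_iff hm] at h
  rw [← h, sum_mul]
  refine sum_congr rfl fun k _ => ?_
  rw [degStirling2]
  have hk : (k.factorial : ℝ) ≠ 0 := by positivity
  field_simp

theorem bell_stirling1_sum_general (lam : ℝ)
    (S1 : ℕ → ℕ → ℝ) (B : ℕ → ℝ → ℝ)
    (hS1 : ∀ (n : ℕ) (x : ℝ), dff 1 n x = ∑ l ∈ Finset.range (n + 1), S1 n l * dff lam l x)
    (hB : ∀ x : ℝ, pscomp (degExp lam x) (degExp lam 1 - 1) = PowerSeries.mk (fun n => B n x / n.factorial))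
    : ∀ n : ℕ, 1 ≤ n → ∑ m ∈ Finset.Icc 1 n, B m 1 * S1 n m = dff lam n 1 := by
  intro n hn
  have hS1₀ : S1 n 0 = 0 := eq_zero_of_dff_one_eq_sum lam (by omega) (hS1 n)
  have hB₁ := eq_sum_dff_mul_degStirling2_of_pscomp_eq lam 1 (b := fun m => B m 1) (hB 1)
  calc ∑ m ∈ Icc 1 n, B m 1 * S1 n m = ∑ m ∈ range (n + 1), B m 1 * S1 n m := by
        rw [Nat.range_succ_eq_Icc_zero, ← insert_Icc_add_one_left_eq_Icc n.zero_le, zero_add,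
          sum_insert (by simp), hS1₀, mul_zero, zero_add]
    _ = ∑ m ∈ range (n + 1), ∑ k ∈ range (n + 1),
          dff lam k 1 * (S1 n m * degStirling2 lam m k) := by
        refine sum_congr rfl fun m hm => ?_
        have hmn : range (m + 1) ⊆ range (n + 1) := range_subset_range.2 (by simpa using hm)
        rw [hB₁, sum_mul, sum_subset hmn fun k _ hk => by
          rw [degStirling2_eq_zero_of_lt lam (by simpa using hk), mul_zero, zero_mul]]
        exact sum_congr rfl fun k _ => by ring
    _ = ∑ k ∈ range (n + 1),
          dff lam k 1 * ∑ m ∈ range (n + 1), S1 n m * degStirling2 lam m k := by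
        simp only [mul_sum]
        exact sum_comm
    _ = dff lam n 1 := by simp [sum_mul_degStirling2_eq_ite lam (hS1 n)]

theorem bell_stirling1_sum (lam : ℝ) (hlam : lam ≠ 0)
    (S1 : ℕ → ℕ → ℝ) (B : ℕ → ℝ → ℝ)
    (hS1 : ∀ (n : ℕ) (x : ℝ), dff 1 n x = ∑ l ∈ Finset.range (n + 1), S1 n l * dff lam l x)
    (hB : ∀ x : ℝ, pscomp (degExp lam x) (degExp lam 1 - 1) = PowerSeries.mk (fun n => B n x / n.factorial))
    : ∀ n : ℕ, 1 ≤ n → ∑ m ∈ Finset.Icc 1 n, B m 1 * S1 n m = dff lam n 1 :=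
  bell_stirling1_sum_general lam S1 B hS1 hB
end

section
/- Fix a real number λ ≠ 0. For every integer n ≥ 0 and every real x, the degenerate falling factorial satisfies (x)_{n,λ} = Σ_{m=0}^{n} G_{m,λ}(x) S^{(2)}_{J,λ}(n,m). -/
open Finset

/-! Writing `e_λ^x(t) = (1 + λt)^(x/λ)` and `log_λ(1 + t) = ((1 + t)^λ − 1)/λ` as binomial series,
the identity `(1 + X)^a ∘ ((1 + X)^b − 1) = (1 + X)^(ab)` (polynomial in `a`, and clear for
`a ∈ ℕ`) shows that `log_λ` is a left inverse of `e_λ(t) − 1`. Hence `log_λ(log_λ(1 + t) + 1)`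
is a left inverse of `J(t) = e_λ(e_λ(t) − 1) − 1`, so substituting `J` into the generating
function of the `G_{m,λ}(x)` gives back `e_λ^x(t)`. Since `J^m/m!` generates the
`S^{(2)}_{J,λ}(n,m)`, comparing coefficients of `t^n` gives the formula. -/

open PowerSeries

section Substitution

variable {R : Type*} [CommRing R]

theorem PowerSeries.coeff_pow_eq_zero_of_lt {g : R⟦X⟧} (hg : constantCoeff g = 0) {n k : ℕ}
    (h : n < k) : coeff n (g ^ k) = 0 :=
  coeff_of_lt_order n <| (Nat.cast_lt.mpr h).trans_le (le_order_pow_of_constantCoeff_eq_zero k hg)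

theorem PowerSeries.coeff_subst_eq_sum_range {g : R⟦X⟧} (hg : constantCoeff g = 0) (f : R⟦X⟧)
    (n : ℕ) : coeff n (f.subst g) = ∑ k ∈ range (n + 1), coeff k f * coeff n (g ^ k) := by
  rw [coeff_subst' (HasSubst.of_constantCoeff_zero' hg)]
  refine finsum_eq_sum_of_support_subset _ fun k hk => ?_
  by_contra hkn
  rw [mem_coe, mem_range, not_lt] at hkn
  exact hk (by simp [coeff_pow_eq_zero_of_lt hg hkn])

theorem PowerSeries.subst_sub_one {g : R⟦X⟧} (hg : constantCoeff g = 0) (f : R⟦X⟧) :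
    (f - 1).subst g = f.subst g - 1 := by
  rw [← coe_substAlgHom (HasSubst.of_constantCoeff_zero' hg), map_sub, map_one]

theorem PowerSeries.subst_rescale {g : R⟦X⟧} (hg : constantCoeff g = 0) (f : R⟦X⟧) (r : R) :
    f.subst (rescale r g) = rescale r (f.subst g) := by
  rw [rescale_eq_subst, rescale_eq_subst, subst_comp_subst_apply
    (HasSubst.of_constantCoeff_zero' hg) (HasSubst.smul_X' r)]

end Substitution

theorem pscomp_eq_subst {g : ℝ⟦X⟧} (hg : constantCoeff g = 0) (f : ℝ⟦X⟧) :
    pscomp f g = f.subst g := by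
  ext n
  rw [coeff_subst_eq_sum_range hg, pscomp, coeff_mk]

section Field

variable {K : Type*} [Field K] [CharZero K]

theorem PowerSeries.factorial_mul_coeff_subst_egf {g : K⟦X⟧} (hg : constantCoeff g = 0)
    (a : ℕ → K) (s : ℕ → ℕ → K)
    (hs : ∀ k : ℕ, C (k.factorial : K)⁻¹ * g ^ k =
      mk fun n => if k ≤ n then s n k / n.factorial else 0) (n : ℕ) :
    n.factorial * coeff n ((mk fun m => a m / m.factorial).subst g) =
      ∑ m ∈ range (n + 1), a m * s n m := by
  rw [coeff_subst_eq_sum_range hg, mul_sum]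
  refine sum_congr rfl fun m hm => ?_
  have hsm := congrArg (coeff n) (hs m)
  rw [coeff_C_mul, coeff_mk, if_pos (Nat.lt_succ_iff.mp (mem_range.mp hm))] at hsm
  have hm! : (m.factorial : K) ≠ 0 := Nat.cast_ne_zero.mpr m.factorial_ne_zero
  have hn! : (n.factorial : K) ≠ 0 := Nat.cast_ne_zero.mpr n.factorial_ne_zero
  have hgm : coeff n (g ^ m) = m.factorial * (s n m / n.factorial) := by
    rw [← hsm, mul_inv_cancel_left₀ hm!]
  rw [coeff_mk, hgm]
  field_simp

theorem Ring.choose_eq_eval_descPochhammer_div (a : K) (n : ℕ) :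
    Ring.choose a n = (descPochhammer K n).eval a / n.factorial := by
  rw [Ring.choose_eq_smul, ← Polynomial.aeval_eq_smeval, ← descPochhammer_map (algebraMap ℤ K),
    Polynomial.aeval_def, Polynomial.eval₂_eq_eval_map, smul_eq_mul, inv_mul_eq_div]

theorem PowerSeries.binomialSeries_pow (b : K) (m : ℕ) :
    binomialSeries K b ^ m = binomialSeries K (m * b) := by
  induction m with
  | zero => simp
  | succ m ih => rw [pow_succ, ih, ← binomialSeries_add]; push_cast; ring_nf

/- The `n`-th coefficients of both sides are polynomials in `a`, and they agree at `a = m ∈ ℕ`,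
where `(1 + X)^m` is substituted by a ring homomorphism. -/
theorem PowerSeries.binomialSeries_subst_binomialSeries_sub_one (a b : K) :
    (binomialSeries K a).subst (binomialSeries K b - 1) = binomialSeries K (a * b) := by
  set g := binomialSeries K b - 1
  have hg : constantCoeff g = 0 := by simp [g]
  ext n
  let P : Polynomial K := ∑ k ∈ range (n + 1),
    Polynomial.C (coeff n (g ^ k) / k.factorial) * descPochhammer K k
  let Q : Polynomial K := Polynomial.C (n.factorial : K)⁻¹ *
    (descPochhammer K n).comp (Polynomial.C b * Polynomial.X)
  have hP (t : K) : coeff n ((binomialSeries K t).subst g) = P.eval t := by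
    simp only [coeff_subst_eq_sum_range hg, binomialSeries_coeff, smul_eq_mul, mul_one,
      Ring.choose_eq_eval_descPochhammer_div, P, Polynomial.eval_finsetSum, Polynomial.eval_mul,
      Polynomial.eval_C]
    exact sum_congr rfl fun k _ => by ring
  have hQ (t : K) : coeff n (binomialSeries K (t * b)) = Q.eval t := by
    simp [Q, Ring.choose_eq_eval_descPochhammer_div, mul_comm t b, div_eq_inv_mul]
  have hnat (m : ℕ) : (binomialSeries K (m : K)).subst g = binomialSeries K (m * b) := by
    rw [binomialSeries_nat, ← coe_substAlgHom (HasSubst.of_constantCoeff_zero' hg), map_pow,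
      map_add, map_one, substAlgHom_X, add_sub_cancel, binomialSeries_pow]
  have hPQ : P = Q := Polynomial.eq_of_infinite_eval_eq P Q <|
    (Set.infinite_range_of_injective Nat.cast_injective).mono <| by
      rintro _ ⟨m, rfl⟩
      exact (hP m).symm.trans ((congrArg (coeff n) (hnat m)).trans (hQ m))
  rw [hP, hPQ, ← hQ]

end Field

section Degenerate

variable {lam : ℝ}

theorem dff_eq_pow_mul_eval_descPochhammer (hlam : lam ≠ 0) (n : ℕ) (x : ℝ) :
    dff lam n x = lam ^ n * (descPochhammer ℝ n).eval (x / lam) := by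
  rw [dff, descPochhammer_eval_eq_prod_range, ← card_range n, ← prod_const, card_range,
    ← prod_mul_distrib]
  exact prod_congr rfl fun i _ => by field_simp

theorem degExp_eq_rescale_binomialSeries (hlam : lam ≠ 0) (x : ℝ) :
    degExp lam x = rescale lam (PowerSeries.binomialSeries ℝ (x / lam)) := by
  ext n
  rw [degExp, coeff_mk, coeff_rescale, binomialSeries_coeff, smul_eq_mul, mul_one,
    Ring.choose_eq_eval_descPochhammer_div, dff_eq_pow_mul_eval_descPochhammer hlam, mul_div_assoc]

theorem degLog_eq_smul_binomialSeries_sub_one (hlam : lam ≠ 0) :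
    degLog lam = lam⁻¹ • (PowerSeries.binomialSeries ℝ lam - 1) := by
  ext n
  rcases n.eq_zero_or_pos with rfl | hn
  · simp [degLog]
  · obtain ⟨m, rfl⟩ := Nat.exists_eq_add_one_of_ne_zero hn.ne'
    rw [degLog, coeff_mk, if_neg m.succ_ne_zero, coeff_smul, map_sub, coeff_one,
      if_neg m.succ_ne_zero, sub_zero, binomialSeries_coeff, smul_eq_mul, smul_eq_mul, mul_one,
      Ring.choose_eq_eval_descPochhammer_div, dff_eq_pow_mul_eval_descPochhammer (by simpa),
      Nat.add_sub_cancel, one_div_one_div, one_div, inv_pow, pow_succ]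
    field_simp

theorem constantCoeff_degExp_sub_one (lam x : ℝ) : constantCoeff (degExp lam x - 1) = 0 := by
  rw [map_sub, ← coeff_zero_eq_constantCoeff_apply, degExp, coeff_mk]
  simp [dff]

theorem constantCoeff_degLog (lam : ℝ) : constantCoeff (degLog lam) = 0 := by
  rw [← coeff_zero_eq_constantCoeff_apply, degLog, coeff_mk, if_pos rfl]

theorem degLog_subst_degExp_sub_one (hlam : lam ≠ 0) :
    (degLog lam).subst (degExp lam 1 - 1) = X := by
  have hsub : HasSubst (degExp lam 1 - 1) :=
    HasSubst.of_constantCoeff_zero' (constantCoeff_degExp_sub_one lam 1)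
  have hB : constantCoeff (PowerSeries.binomialSeries ℝ (1 / lam) - 1) = 0 := by simp
  have hE : degExp lam 1 - 1 = rescale lam (PowerSeries.binomialSeries ℝ (1 / lam) - 1) := by
    rw [degExp_eq_rescale_binomialSeries hlam, map_sub, map_one]
  rw [degLog_eq_smul_binomialSeries_sub_one hlam, ← coe_substAlgHom hsub, map_smul, map_sub,
    map_one, coe_substAlgHom, hE, subst_rescale hB, binomialSeries_subst_binomialSeries_sub_one,
    mul_one_div_cancel hlam, ← Nat.cast_one, binomialSeries_nat, pow_one, map_add, map_one,
    rescale_X, add_sub_cancel_left, smul_eq_C_mul, ← mul_assoc, ← map_mul, inv_mul_cancel₀ hlam,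
    map_one, one_mul]

/-- `e_λ(e_λ(t) − 1) − 1`, whose powers generate the Jindalrae–Stirling numbers. -/
noncomputable def jindalraeSeries (lam : ℝ) : ℝ⟦X⟧ :=
  (degExp lam 1 - 1).subst (degExp lam 1 - 1)

theorem pscomp_degExp_sub_one_eq_jindalraeSeries (lam : ℝ) :
    pscomp (degExp lam 1) (degExp lam 1 - 1) - 1 = jindalraeSeries lam := by
  rw [jindalraeSeries, subst_sub_one (constantCoeff_degExp_sub_one lam 1),
    pscomp_eq_subst (constantCoeff_degExp_sub_one lam 1)]

theorem constantCoeff_jindalraeSeries (lam : ℝ) : constantCoeff (jindalraeSeries lam) = 0 :=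
  PowerSeries.constantCoeff_subst_eq_zero (constantCoeff_degExp_sub_one lam 1) _
    (constantCoeff_degExp_sub_one lam 1)

theorem subst_jindalraeSeries_degLog_subst_degLog (hlam : lam ≠ 0) :
    subst (jindalraeSeries lam) (subst (degLog lam) (degLog lam)) = X := by
  have hE := HasSubst.of_constantCoeff_zero' (constantCoeff_degExp_sub_one lam 1)
  rw [subst_comp_subst_apply (HasSubst.of_constantCoeff_zero' (constantCoeff_degLog lam))
    (HasSubst.of_constantCoeff_zero' (constantCoeff_jindalraeSeries lam)), jindalraeSeries,
    ← subst_comp_subst_apply hE hE, degLog_subst_degExp_sub_one hlam, subst_X hE,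
    degLog_subst_degExp_sub_one hlam]

end Degenerate

theorem degenerate_falling_via_gaenari_jindalrae2 (lam : ℝ) (hlam : lam ≠ 0)
    (SJ2 : ℕ → ℕ → ℝ) (G : ℕ → ℝ → ℝ)
    (hSJ2 : ∀ k : ℕ, (PowerSeries.C ((k.factorial : ℝ))⁻¹) * (pscomp (degExp lam 1) (degExp lam 1 - 1) - 1) ^ k = PowerSeries.mk (fun n => if k ≤ n then SJ2 n k / n.factorial else 0))
    (hG : ∀ x : ℝ, pscomp (degExp lam x) (pscomp (degLog lam) (degLog lam)) = PowerSeries.mk (fun n => G n x / n.factorial))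
    : ∀ (n : ℕ) (x : ℝ), dff lam n x = ∑ m ∈ Finset.range (n + 1), G m x * SJ2 n m := by
  intro n x
  have hΛ := constantCoeff_degLog lam
  have hΛΛ := PowerSeries.constantCoeff_subst_eq_zero hΛ _ hΛ
  have hJ := constantCoeff_jindalraeSeries lam
  have hGx : (mk fun m => G m x / m.factorial).subst (jindalraeSeries lam) = degExp lam x := by
    rw [← hG x, pscomp_eq_subst hΛ, pscomp_eq_subst hΛΛ,
      subst_comp_subst_apply (HasSubst.of_constantCoeff_zero' hΛΛ)
        (HasSubst.of_constantCoeff_zero' hJ),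
      subst_jindalraeSeries_degLog_subst_degLog hlam, X_subst]
  calc dff lam n x = n.factorial * coeff n (degExp lam x) := by
        rw [degExp, coeff_mk]
        field_simp
    _ = ∑ m ∈ range (n + 1), G m x * SJ2 n m := by
        rw [← hGx]
        refine factorial_mul_coeff_subst_egf hJ _ _ (fun k => ?_) n
        rw [← pscomp_degExp_sub_one_eq_jindalraeSeries, hSJ2]
end

section
/- For all integers n ≥ k ≥ 1, Σ_{m=k}^{n} S_2(n,m) S_2(m,k) = (1/k!) Σ_{n_1+⋯+n_k=n, each n_i ≥ 1} (n! / (n_1! ⋯ n_k!)) B_{n_1} ⋯ B_{n_k}, where the sum on the right runs over all ordered k-tuples of positive integers summing to n. -/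
open Finset

open scoped Nat
open PowerSeries

/-!
With `E = exp − 1`, specialising the defining identity to `x = j ∈ ℕ` and comparing it with
`e^{jt} = (1 + E)^j` shows `S₂(n, m) = n!/m! · [tⁿ] E^m`, since coefficients against falling
factorials are determined by the values at `0, 1, …, n`. Consequently `Bₙ/n! = [tⁿ] E(E(t))` for
`n ≥ 1`, and `Σₘ S₂(n, m) S₂(m, k) = n!/k! · [tⁿ] (E^k)∘E = n!/k! · [tⁿ] (E∘E)^k`. Expanding the
`k`-th power over compositions of `n` into positive parts gives the multinomial sum.
-/

namespace PowerSeries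

section CommRing

variable {R : Type*} [CommRing R]

theorem coeff_pow_eq_zero_of_lt_s18 {g : R⟦X⟧} (hg : constantCoeff g = 0) {n m : ℕ} (h : n < m) :
    coeff n (g ^ m) = 0 :=
  X_pow_dvd_iff.mp (pow_dvd_pow_of_dvd (X_dvd_iff.mpr hg) m) n h

theorem coeff_subst_eq_sum_range_s18 {g : R⟦X⟧} (hg : constantCoeff g = 0) (f : R⟦X⟧) (n : ℕ) :
    coeff n (f.subst g) = ∑ m ∈ range (n + 1), coeff m f * coeff n (g ^ m) := by
  rw [coeff_subst' (HasSubst.of_constantCoeff_zero' hg)]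
  refine finsum_eq_sum_of_support_subset _ fun m hm => ?_
  contrapose! hm
  simp [coeff_pow_eq_zero_of_lt_s18 hg (by simpa using hm)]

theorem coeff_pow_eq_sum_antidiagonalTuple (g : R⟦X⟧) (k n : ℕ) :
    coeff n (g ^ k) = ∑ f ∈ Nat.antidiagonalTuple k n, ∏ i, coeff (f i) g := by
  rw [← Fin.prod_const, coeff_prod]
  exact sum_equiv Finsupp.equivFunOnFinite (by simp [Nat.mem_antidiagonalTuple]) (by simp)

theorem coeff_pow_eq_sum_antidiagonalTuple_pos {g : R⟦X⟧} (hg : constantCoeff g = 0) (k n : ℕ) :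
    coeff n (g ^ k) =
      ∑ f ∈ (Nat.antidiagonalTuple k n).filter (fun f => ∀ i, f i ≠ 0), ∏ i, coeff (f i) g := by
  rw [coeff_pow_eq_sum_antidiagonalTuple, sum_filter_of_ne]
  intro f _ hf i hi
  exact hf (prod_eq_zero (mem_univ i) (by rw [hi, coeff_zero_eq_constantCoeff_apply, hg]))

end CommRing

section Field

variable {K : Type*} [Field K] [CharZero K]

theorem constantCoeff_exp_sub_one : constantCoeff (exp K - 1) = 0 := by
  simp

theorem coeff_exp_sub_one {n : ℕ} (hn : n ≠ 0) : coeff n (exp K - 1) = (n ! : K)⁻¹ := by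
  simp [coeff_one, hn]

theorem coeff_exp_pow (j n : ℕ) : coeff n (exp K ^ j) = (j : K) ^ n / n ! := by
  simp [exp_pow_eq_rescale_exp, coeff_rescale, coeff_exp, div_eq_mul_inv]

end Field

end PowerSeries

theorem eq_of_forall_sum_mul_descFactorial_eq {R : Type*} [CommRing R] [NoZeroDivisors R]
    [CharZero R] {n : ℕ} {a b : ℕ → R}
    (h : ∀ j : ℕ, ∑ l ∈ range (n + 1), a l * j.descFactorial l =
      ∑ l ∈ range (n + 1), b l * j.descFactorial l) {m : ℕ} (hm : m ≤ n) : a m = b m := by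
  induction m using Nat.strong_induction_on with
  | _ m ih =>
  have hm0 : ∑ l ∈ range (n + 1), (a l - b l) * m.descFactorial l = 0 := by
    simp only [sub_mul, sum_sub_distrib, h, sub_self]
  rw [sum_eq_single_of_mem m (mem_range.mpr (by omega)) fun l _ hlm => ?_,
    Nat.descFactorial_self, mul_eq_zero, sub_eq_zero] at hm0
  · exact hm0.resolve_right (Nat.cast_ne_zero.mpr m.factorial_ne_zero)
  · rcases hlm.lt_or_gt with hlt | hgt
    · rw [ih l hlt (by omega), sub_self, zero_mul]
    · rw [Nat.descFactorial_eq_zero_iff_lt.mpr hgt, Nat.cast_zero, mul_zero]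

theorem natCast_pow_eq_sum_coeff_exp_sub_one_pow_mul_descFactorial {K : Type*} [Field K]
    [CharZero K] (n j : ℕ) :
    (j : K) ^ n =
      ∑ l ∈ range (n + 1), (n ! / l ! : K) * coeff n ((exp K - 1) ^ l) * j.descFactorial l := by
  have hbinom : exp K ^ j = ∑ l ∈ range (j + 1), (exp K - 1) ^ l * (j.choose l : K⟦X⟧) := by
    simpa using add_pow (exp K - 1) 1 j
  have hterm (l : ℕ) : n ! / l ! * coeff n ((exp K - 1) ^ l) * j.descFactorial l =
      (n ! : K) * (coeff n ((exp K - 1) ^ l) * j.choose l) := by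
    have : (l ! : K) ≠ 0 := Nat.cast_ne_zero.mpr l.factorial_ne_zero
    rw [Nat.descFactorial_eq_factorial_mul_choose, Nat.cast_mul]
    field_simp
  calc (j : K) ^ n = n ! * coeff n (exp K ^ j) := by
        have : (n ! : K) ≠ 0 := Nat.cast_ne_zero.mpr n.factorial_ne_zero
        rw [coeff_exp_pow]
        field_simp
    _ = ∑ l ∈ range (j + 1), (n ! : K) * (coeff n ((exp K - 1) ^ l) * j.choose l) := by
        rw [hbinom, map_sum, mul_sum]
        simp_rw [← map_natCast (C (R := K)), coeff_mul_C]
    _ = ∑ l ∈ range (n + j + 1), (n ! : K) * (coeff n ((exp K - 1) ^ l) * j.choose l) := by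
        refine sum_subset (range_subset_range.mpr (by omega)) fun l _ hlj => ?_
        simp [Nat.choose_eq_zero_of_lt (by simpa using hlj : j < l)]
    _ = ∑ l ∈ range (n + 1), (n ! / l ! : K) * coeff n ((exp K - 1) ^ l) * j.descFactorial l := by
        simp only [hterm]
        refine (sum_subset (range_subset_range.mpr (by omega)) fun l _ hln => ?_).symm
        rw [coeff_pow_eq_zero_of_lt_s18 constantCoeff_exp_sub_one (by simpa using hln)]
        simp

theorem dff_one_natCast_s18 (l j : ℕ) : dff 1 l j = j.descFactorial l := by
  rw [← descPochhammer_eval_eq_descFactorial, descPochhammer_eval_eq_prod_range, dff]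
  simp

theorem stirling2_eq_coeff_exp_sub_one_pow {S2 : ℕ → ℕ → ℝ}
    (hS2 : ∀ (n : ℕ) (x : ℝ), x ^ n = ∑ m ∈ range (n + 1), S2 n m * dff 1 m x)
    {n m : ℕ} (hm : m ≤ n) : S2 n m = (n ! / m ! : ℝ) * coeff n ((exp ℝ - 1) ^ m) := by
  refine eq_of_forall_sum_mul_descFactorial_eq (a := S2 n)
    (b := fun m => (n ! / m ! : ℝ) * coeff n ((exp ℝ - 1) ^ m)) (fun j => ?_) hm
  rw [← natCast_pow_eq_sum_coeff_exp_sub_one_pow_mul_descFactorial (K := ℝ), hS2]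
  simp only [dff_one_natCast_s18]

theorem coeff_subst_exp_sub_one_eq_bell {S2 : ℕ → ℕ → ℝ} {Bell : ℕ → ℝ}
    (hS2 : ∀ (n : ℕ) (x : ℝ), x ^ n = ∑ m ∈ range (n + 1), S2 n m * dff 1 m x)
    (hBell : ∀ n : ℕ, Bell n = ∑ m ∈ range (n + 1), S2 n m) {j : ℕ} (hj : j ≠ 0) :
    coeff j ((exp ℝ - 1).subst (exp ℝ - 1)) = Bell j / j ! := by
  rw [coeff_subst_eq_sum_range_s18 constantCoeff_exp_sub_one, hBell, sum_div]
  refine sum_congr rfl fun m hm => ?_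
  rw [stirling2_eq_coeff_exp_sub_one_pow hS2 (Nat.lt_succ_iff.mp (mem_range.mp hm))]
  rcases eq_or_ne m 0 with rfl | hm0
  · simp [coeff_one, hj]
  · have : (j ! : ℝ) ≠ 0 := Nat.cast_ne_zero.mpr j.factorial_ne_zero
    rw [coeff_exp_sub_one hm0]
    field_simp

theorem sum_stirling2_mul_stirling2_eq_coeff_pow {S2 : ℕ → ℕ → ℝ}
    (hS2 : ∀ (n : ℕ) (x : ℝ), x ^ n = ∑ m ∈ range (n + 1), S2 n m * dff 1 m x) (n k : ℕ) :
    ∑ m ∈ Icc k n, S2 n m * S2 m k =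
      (n ! / k ! : ℝ) * coeff n (((exp ℝ - 1).subst (exp ℝ - 1)) ^ k) := by
  have hE := constantCoeff_exp_sub_one (K := ℝ)
  calc ∑ m ∈ Icc k n, S2 n m * S2 m k
      = ∑ m ∈ Icc k n,
          (n ! / k ! : ℝ) * (coeff m ((exp ℝ - 1) ^ k) * coeff n ((exp ℝ - 1) ^ m)) := by
        refine sum_congr rfl fun m hm => ?_
        obtain ⟨hkm, hmn⟩ := mem_Icc.mp hm
        have : (m ! : ℝ) ≠ 0 := Nat.cast_ne_zero.mpr m.factorial_ne_zero
        rw [stirling2_eq_coeff_exp_sub_one_pow hS2 hmn, stirling2_eq_coeff_exp_sub_one_pow hS2 hkm]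
        field_simp
    _ = (n ! / k ! : ℝ) *
          ∑ m ∈ range (n + 1), coeff m ((exp ℝ - 1) ^ k) * coeff n ((exp ℝ - 1) ^ m) := by
        rw [← mul_sum]
        congr 1
        refine sum_subset (fun m hm => ?_) fun m _ hm => ?_
        · simpa [Nat.lt_succ_iff] using (mem_Icc.mp hm).2
        · rw [coeff_pow_eq_zero_of_lt_s18 hE (by simp_all), zero_mul]
    _ = (n ! / k ! : ℝ) * coeff n (((exp ℝ - 1).subst (exp ℝ - 1)) ^ k) := by
        rw [← coeff_subst_eq_sum_range_s18 hE, subst_pow (HasSubst.of_constantCoeff_zero' hE)]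

theorem Nat.cast_multinomial {ι K : Type*} [Field K] [CharZero K] (s : Finset ι) (f : ι → ℕ) :
    (multinomial s f : K) = (∑ i ∈ s, f i)! / ∏ i ∈ s, ((f i)! : K) := by
  rw [eq_div_iff (prod_ne_zero_iff.mpr fun i _ => Nat.cast_ne_zero.mpr (factorial_ne_zero _)),
    mul_comm]
  exact_mod_cast multinomial_spec s f

theorem stirling2_composition_bell (S2 : ℕ → ℕ → ℝ) (Bell : ℕ → ℝ)
    (hS2 : ∀ (n : ℕ) (x : ℝ), x ^ n = ∑ m ∈ Finset.range (n + 1), S2 n m * dff 1 m x)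
    (hBell : ∀ n : ℕ, Bell n = ∑ m ∈ Finset.range (n + 1), S2 n m)
    : ∀ n k : ℕ, 1 ≤ k → k ≤ n →
      ∑ m ∈ Finset.Icc k n, S2 n m * S2 m k =
        ((k.factorial : ℝ))⁻¹ *
          ∑ f ∈ (Finset.Nat.antidiagonalTuple k n).filter (fun f => ∀ i, f i ≠ 0),
            (Nat.multinomial Finset.univ f : ℝ) * ∏ i, Bell (f i) := by
  intro n k _ _
  have hE := constantCoeff_exp_sub_one (K := ℝ)
  rw [sum_stirling2_mul_stirling2_eq_coeff_pow hS2,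
    coeff_pow_eq_sum_antidiagonalTuple_pos (constantCoeff_subst_eq_zero hE _ hE), mul_sum, mul_sum]
  refine sum_congr rfl fun f hf => ?_
  obtain ⟨hf, hpos⟩ := mem_filter.mp hf
  have : ∀ i, ((f i) ! : ℝ) ≠ 0 := fun i => Nat.cast_ne_zero.mpr (f i).factorial_ne_zero
  rw [prod_congr rfl fun i _ => coeff_subst_exp_sub_one_eq_bell hS2 hBell (hpos i),
    Nat.cast_multinomial, Nat.mem_antidiagonalTuple.mp hf, prod_div_distrib]
  field_simp
end
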